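/- The cubic-in-time functional K(s) = (1/2) u(s)ᵀ N(ρ(s)) u(s), with u, ρ linear in s and N linear, satisfies K(1) - K(0) = [(1/3)N(ρⁿ)uⁿ + (1/6)N(ρⁿ)uᵏ + (1/6)N(ρᵏ)uⁿ + (1/3)N(ρᵏ)uᵏ] · (uᵏ - uⁿ) + [(1/3)Φⁿⁿ + (1/3)Φᵏⁿ + (1/3)Φᵏᵏ] with Φ-terms (1/2)uᵀN'u evaluated at the appropriate endpoint combinations dotted with (ρᵏ - ρⁿ), i.e., the exact change in K decomposes into the weighted discrete variational derivatives in u and in ρ given by the weights (1/3,1/6,1/6,1/3) and (1/3,1/3,1/3) respectively. -/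

import Mathlib

open Matrix

/-!
With `A = N ρⁿ` and `B = N ρᵏ`, linearity gives `N (ρᵏ - ρⁿ) = B - A`, so both sides are
combinations of the scalars `x ⬝ᵥ A *ᵥ y` and `x ⬝ᵥ B *ᵥ y` for `x, y ∈ {uⁿ, uᵏ}`. Symmetry of
`A` and `B` identifies the two mixed terms of each, and the identity becomes a polynomial one.
-/

theorem Matrix.IsSymm.dotProduct_mulVec_comm {ι R : Type*} [Fintype ι] [CommSemiring R]
    {A : Matrix ι ι R} (hA : A.IsSymm) (x y : ι → R) :
    x ⬝ᵥ A *ᵥ y = y ⬝ᵥ A *ᵥ x := by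
  rw [← dotProduct_transpose_mulVec, hA]

theorem half_quadForm_sub_eq {ι R : Type*} [Fintype ι] [Field R] [CharZero R]
    {A B : Matrix ι ι R} (hA : A.IsSymm) (hB : B.IsSymm) (x y : ι → R) :
    (1/2 : R) * (y ⬝ᵥ B *ᵥ y) - (1/2 : R) * (x ⬝ᵥ A *ᵥ x) =
      ((1/3 : R) • (A *ᵥ x) + (1/6 : R) • (A *ᵥ y) + (1/6 : R) • (B *ᵥ x) +
          (1/3 : R) • (B *ᵥ y)) ⬝ᵥ (y - x) +
        (1/6 : R) * (x ⬝ᵥ (B - A) *ᵥ x + y ⬝ᵥ (B - A) *ᵥ x + y ⬝ᵥ (B - A) *ᵥ y) := by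
  have hA_comm := hA.dotProduct_mulVec_comm x y
  have hB_comm := hB.dotProduct_mulVec_comm x y
  simp only [sub_mulVec, dotProduct_sub, add_dotProduct, smul_dotProduct, smul_eq_mul,
    dotProduct_comm (_ *ᵥ _) x, dotProduct_comm (_ *ᵥ _) y]
  linear_combination (1/6 : R) * hA_comm + (1/3 : R) * hB_comm

/-- The exact change of the cubic-in-time functional `K(s) = (1/2)u(s)ᵀN(ρ(s))u(s)`
decomposes into the weighted discrete variational derivatives in `u` (weights
1/3, 1/6, 1/6, 1/3) and in `ρ` (weights 1/3, 1/3, 1/3). -/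
theorem stmt_14 {m n : ℕ}
    (N : (Fin m → ℝ) →ₗ[ℝ] Matrix (Fin n) (Fin n) ℝ)
    (hsym : ∀ ρ : Fin m → ℝ, (N ρ)ᵀ = N ρ)
    (un uk : Fin n → ℝ) (ρn ρk : Fin m → ℝ)
    (u : ℝ → Fin n → ℝ) (ρ : ℝ → Fin m → ℝ)
    (hu : ∀ s : ℝ, u s = (1 - s) • un + s • uk)
    (hρ : ∀ s : ℝ, ρ s = (1 - s) • ρn + s • ρk)
    (K : ℝ → ℝ) (hK : ∀ s : ℝ, K s = (1/2 : ℝ) * (u s ⬝ᵥ (N (ρ s)) *ᵥ u s))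
    (T : (Fin n → ℝ) → (Fin n → ℝ) → (Fin m → ℝ))
    (hT : ∀ σ τ δρ, T σ τ ⬝ᵥ δρ = (1/2 : ℝ) * (σ ⬝ᵥ (N δρ) *ᵥ τ)) :
    K 1 - K 0 =
      ((1/3 : ℝ) • ((N ρn) *ᵥ un) + (1/6 : ℝ) • ((N ρn) *ᵥ uk) +
        (1/6 : ℝ) • ((N ρk) *ᵥ un) + (1/3 : ℝ) • ((N ρk) *ᵥ uk)) ⬝ᵥ (uk - un) +
      ((1/3 : ℝ) • T un un + (1/3 : ℝ) • T uk un + (1/3 : ℝ) • T uk uk) ⬝ᵥ (ρk - ρn) := by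
  have hK1 : K 1 = (1/2 : ℝ) * (uk ⬝ᵥ N ρk *ᵥ uk) := by simp [hK, hu, hρ]
  have hK0 : K 0 = (1/2 : ℝ) * (un ⬝ᵥ N ρn *ᵥ un) := by simp [hK, hu, hρ]
  have hT_sum : ((1/3 : ℝ) • T un un + (1/3 : ℝ) • T uk un + (1/3 : ℝ) • T uk uk) ⬝ᵥ (ρk - ρn) =
      (1/6 : ℝ) * (un ⬝ᵥ (N ρk - N ρn) *ᵥ un + uk ⬝ᵥ (N ρk - N ρn) *ᵥ un +
        uk ⬝ᵥ (N ρk - N ρn) *ᵥ uk) := by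
    simp only [add_dotProduct, smul_dotProduct, hT, map_sub, smul_eq_mul]
    ring
  rw [hK1, hK0, hT_sum]
  exact half_quadForm_sub_eq (hsym ρn) (hsym ρk) un uk
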